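/- Let G=(V,E) be a d-manifold with d even. Then for every vertex x, the curvature satisfies K(x) = 1 − E[χ(M_f(x))]/2, where the expectation is over uniformly random bijections f:V→{1,...,|V|}. -/

import Mathlib

open scoped Classical

/-- A finite simple graph: a finite vertex set together with a symmetric, irreflexive
adjacency relation supported on the vertex set. -/
structure FGraph (V : Type) where
  verts : Finset V
  Adj : V → V → Prop
  symm : ∀ {a b}, Adj a b → Adj b a
  loopless : ∀ a, ¬ Adj a a
  mem_of_adj : ∀ {a b}, Adj a b → a ∈ verts

namespace FGraph

variable {V W : Type}

/-- The subgraph induced on the vertices satisfying `P`. -/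
noncomputable def induce (G : FGraph V) (P : V → Prop) : FGraph V where
  verts := G.verts.filter P
  Adj a b := G.Adj a b ∧ P a ∧ P b
  symm h := ⟨G.symm h.1, h.2.2, h.2.1⟩
  loopless a h := G.loopless a h.1
  mem_of_adj h := Finset.mem_filter.mpr ⟨G.mem_of_adj h.1, h.2.1⟩

/-- The unit sphere of a vertex: the subgraph induced on its neighbors. -/
noncomputable def unitSphere (G : FGraph V) (v : V) : FGraph V :=
  G.induce (fun w => G.Adj v w)

/-- The graph with the vertex `v` (and its edges) removed. -/
noncomputable def erase (G : FGraph V) (v : V) : FGraph V :=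
  G.induce (fun w => w ≠ v)

/-- Inductive definition of contractibility: the one-point graph is contractible, and a
graph is contractible if some vertex has a contractible unit sphere and contractible
complement. -/
inductive Contractible : FGraph V → Prop
  | single (G : FGraph V) (v : V) (h : G.verts = {v}) : Contractible G
  | step (G : FGraph V) (v : V) (hv : v ∈ G.verts)
      (h1 : Contractible (G.unitSphere v)) (h2 : Contractible (G.erase v)) :
      Contractible G

mutual
  /-- `G` is a `d`-sphere: the empty graph is the `(-1)`-sphere, and a `d`-manifold is a
  `d`-sphere if removing some vertex renders it contractible. -/
  inductive IsSphere : ℤ → FGraph V → Prop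
    | empty (G : FGraph V) (h : G.verts = ∅) : IsSphere (-1) G
    | punctured (d : ℤ) (G : FGraph V) (hm : IsManifold d G) (v : V) (hv : v ∈ G.verts)
        (hc : Contractible (G.erase v)) : IsSphere d G
  /-- For `d ≥ 0`, `G` is a `d`-manifold iff every unit sphere is a `(d-1)`-sphere. -/
  inductive IsManifold : ℤ → FGraph V → Prop
    | intro (d : ℤ) (hd : 0 ≤ d) (G : FGraph V)
        (h : ∀ v ∈ G.verts, IsSphere (d - 1) (G.unitSphere v)) : IsManifold d G
end

/-- A simplex of `G`: the vertex set of a complete subgraph. -/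
def IsSimplex (G : FGraph V) (x : Finset V) : Prop :=
  x.Nonempty ∧ ↑x ⊆ G.verts ∧ ∀ a ∈ x, ∀ b ∈ x, a ≠ b → G.Adj a b

/-- The Barycentric refinement: vertices are the simplices of `G`, two being adjacent iff
one is strictly contained in the other. -/
noncomputable def barycentric (G : FGraph V) : FGraph (Finset V) where
  verts := G.verts.powerset.filter (fun x => G.IsSimplex x)
  Adj x y := G.IsSimplex x ∧ G.IsSimplex y ∧ (x ⊂ y ∨ y ⊂ x)
  symm h := ⟨h.2.1, h.1, h.2.2.symm⟩
  loopless x h := by rcases h.2.2 with h' | h' <;> exact (ssubset_irrefl x h')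
  mem_of_adj h := Finset.mem_filter.mpr ⟨Finset.mem_powerset.mpr h.1.2.1, h.1⟩

/-- Number of simplices of `G` with exactly `j` vertices (so `numSimplices G (k+1)` is
the `f`-vector entry `f_k(G)`). -/
noncomputable def numSimplices (G : FGraph V) (j : ℕ) : ℕ :=
  (G.verts.powerset.filter (fun x => G.IsSimplex x ∧ x.card = j)).card

/-- Euler characteristic `χ(G) = Σ_{k ≥ 0} (-1)^k f_k(G)`, where `f_k` counts the
simplices with `k+1` vertices. -/
noncomputable def euler (G : FGraph V) : ℤ :=
  ∑ k ∈ Finset.range G.verts.card, (-1 : ℤ) ^ k * G.numSimplices (k + 1)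

/-- The level set `{f = c}`: the subgraph of the Barycentric refinement induced by the
simplices on which `f - c` changes sign. -/
noncomputable def levelSet (G : FGraph V) (f : V → ℝ) (c : ℝ) : FGraph (Finset V) :=
  G.barycentric.induce (fun x => (∃ a ∈ x, f a - c < 0) ∧ (∃ b ∈ x, 0 < f b - c))

/-- Graph isomorphism. -/
def Iso (G : FGraph V) (H : FGraph W) : Prop :=
  ∃ φ : V → W, Set.BijOn φ ↑G.verts ↑H.verts ∧
    ∀ a ∈ G.verts, ∀ b ∈ G.verts, (G.Adj a b ↔ H.Adj (φ a) (φ b))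

/-- Zykov join of two graphs: disjoint union plus all edges between the two parts. -/
noncomputable def join (G : FGraph V) (H : FGraph W) : FGraph (V ⊕ W) where
  verts := G.verts.disjSum H.verts
  Adj a b :=
    match a, b with
    | .inl a, .inl b => G.Adj a b
    | .inr a, .inr b => H.Adj a b
    | .inl a, .inr b => a ∈ G.verts ∧ b ∈ H.verts
    | .inr a, .inl b => b ∈ G.verts ∧ a ∈ H.verts
  symm {a b} h := by
    cases a <;> cases b <;> simp_all <;> first | exact G.symm h | exact H.symm h
  loopless a h := by
    cases a <;> simp_all <;> first | exact G.loopless _ h | exact H.loopless _ h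
  mem_of_adj {a b} h := by
    cases a <;> cases b <;> simp_all [Finset.mem_disjSum] <;>
      first | exact G.mem_of_adj h | exact H.mem_of_adj h

/-- Union of two graphs on the same vertex type. -/
noncomputable def union (G H : FGraph V) : FGraph V where
  verts := G.verts ∪ H.verts
  Adj a b := G.Adj a b ∨ H.Adj a b
  symm h := h.imp G.symm H.symm
  loopless a h := h.elim (G.loopless a) (H.loopless a)
  mem_of_adj h :=
    h.elim (fun h' => Finset.mem_union_left _ (G.mem_of_adj h'))
      (fun h' => Finset.mem_union_right _ (H.mem_of_adj h'))

/-- A `d`-ball: a graph of the form `S - v` for a `d`-sphere `S` and a vertex `v` of `S`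
(up to graph isomorphism). -/
def IsBall (d : ℤ) (H : FGraph W) : Prop :=
  ∃ (S : FGraph ℕ) (v : ℕ), IsSphere d S ∧ v ∈ S.verts ∧ Iso H (S.erase v)

/-- A `d`-manifold with boundary: every unit sphere is a `(d-1)`-sphere or a `(d-1)`-ball. -/
def IsManifoldWithBoundary (d : ℤ) (G : FGraph V) : Prop :=
  ∀ v ∈ G.verts, IsSphere (d - 1) (G.unitSphere v) ∨ IsBall (d - 1) (G.unitSphere v)

/-- The cyclic graph `C_n` on the vertex set `Fin n`. -/
def cycleGraph (n : ℕ) : FGraph (Fin n) where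
  verts := Finset.univ
  Adj a b := a ≠ b ∧ ((a.val + 1) % n = b.val ∨ (b.val + 1) % n = a.val)
  symm h := ⟨h.1.symm, h.2.symm⟩
  loopless a h := h.1 rfl
  mem_of_adj _ := Finset.mem_univ _

/-- `G` is a disjoint union of cyclic graphs `C_n` with `n ≥ 4`: the vertex set splits
into pairwise disjoint pieces, edges never cross between pieces, and each piece induces
a graph isomorphic to a `C_n` with `n ≥ 4`. -/
def IsDisjointUnionOfCycles (G : FGraph V) : Prop :=
  ∃ P : Finset (Finset V),
    (∀ S ∈ P, ↑S ⊆ G.verts) ∧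
    (∀ S ∈ P, ∀ T ∈ P, S ≠ T → Disjoint S T) ∧
    (∀ v ∈ G.verts, ∃ S ∈ P, v ∈ S) ∧
    (∀ a b, G.Adj a b → ∀ S ∈ P, a ∈ S → b ∈ S) ∧
    (∀ S ∈ P, ∃ n, 4 ≤ n ∧ Iso (G.induce (· ∈ S)) (cycleGraph n))

/-- Poincaré–Hopf index `i_f(v) = 1 - χ(S^-_f(v))`. -/
noncomputable def pindex (G : FGraph V) (f : V → ℝ) (v : V) : ℤ :=
  1 - ((G.unitSphere v).induce (fun w => f w < f v)).euler

/-- Curvature `K(v) = Σ_{k ≥ 0} (-1)^k f_{k-1}(S(v))/(k+1)` with `f_{-1} = 1`. -/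
noncomputable def curvature (G : FGraph V) (v : V) : ℝ :=
  ∑ k ∈ Finset.range (G.verts.card + 1),
    (-1 : ℝ) ^ k * (if k = 0 then 1 else ((G.unitSphere v).numSimplices k : ℝ)) / (k + 1)

end FGraph

/-- `sign(a + i b) = sign(a) + i sign(b)`. -/
noncomputable def csgn (z : ℂ) : ℂ :=
  ⟨Real.sign z.re, Real.sign z.im⟩

/-- The set `U = {1+i, 1-i, -1+i, -1-i}` of possible values of `csgn`. -/
noncomputable def signU : Finset ℂ :=
  {1 + Complex.I, 1 - Complex.I, -1 + Complex.I, -1 - Complex.I}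

namespace FGraph

variable {V : Type}

/-- The set of values of `sign(ψ - c)` attained on the finite vertex set `x`. -/
noncomputable def signValues (ψ : V → ℂ) (c : ℂ) (x : Finset V) : Finset ℂ :=
  x.image (fun v => csgn (ψ v - c))

/-- The level set `{ψ = c}` of a complex-valued function: the subgraph of the Barycentric
refinement induced by the simplices on which `sign(ψ - c)` takes at least three distinct
values, including `-1+i` and `1-i`. -/
noncomputable def complexLevelSet (G : FGraph V) (ψ : V → ℂ) (c : ℂ) : FGraph (Finset V) :=
  G.barycentric.induce (fun x =>
    3 ≤ (signValues ψ c x).card ∧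
    (-1 + Complex.I) ∈ signValues ψ c x ∧ (1 - Complex.I) ∈ signValues ψ c x)

/-- The level set `{ψ = 0}_e` for a two-element subset `e ⊆ U`: the subgraph of the
Barycentric refinement induced by the simplices on which `sign(ψ)` attains both values
of `e` and at least three distinct values in total. -/
noncomputable def complexLevelSetE (G : FGraph V) (ψ : V → ℂ) (e : Finset ℂ) :
    FGraph (Finset V) :=
  G.barycentric.induce (fun x =>
    (∀ u ∈ e, u ∈ signValues ψ 0 x) ∧ 3 ≤ (signValues ψ 0 x).card)

/-- `Ψ^{-1}(t)`: the subgraph of the Barycentric refinement induced by the simplices on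
which `sign(ψ)` attains all values of `t`. -/
noncomputable def signPreimage (G : FGraph V) (ψ : V → ℂ) (t : Finset ℂ) :
    FGraph (Finset V) :=
  G.barycentric.induce (fun x => ∀ u ∈ t, u ∈ signValues ψ 0 x)

/-- The sign vectors of `F - c` attained on the finite vertex set `x`. -/
noncomputable def vecSignValues {k : ℕ} (F : V → Fin k → ℝ) (c : Fin k → ℝ)
    (x : Finset V) : Finset (Fin k → ℝ) :=
  x.image (fun v j => Real.sign (F v j - c j))

/-- The level set `{F = c}` of an `ℝ^k`-valued function: the subgraph of the Barycentric
refinement induced by the simplices on which the sign vector of `F - c` takes at least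
`k+1` distinct values, including the `k` vectors `(1,…,1,-1,1,…,1)`. -/
noncomputable def vecLevelSet (G : FGraph V) {k : ℕ} (F : V → Fin k → ℝ) (c : Fin k → ℝ) :
    FGraph (Finset V) :=
  G.barycentric.induce (fun x =>
    k + 1 ≤ (vecSignValues F c x).card ∧
    ∀ j : Fin k, (fun i => if i = j then (-1 : ℝ) else 1) ∈ vecSignValues F c x)

end FGraph

/-- The complete graph on `Fin n`. -/
def completeFGraph (n : ℕ) : FGraph (Fin n) where
  verts := Finset.univ
  Adj a b := a ≠ b
  symm h := h.symm
  loopless a h := h rfl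
  mem_of_adj _ := Finset.mem_univ _

/-- Stirling numbers of the second kind. -/
def stirling2 : ℕ → ℕ → ℕ
  | 0, 0 => 1
  | 0, _ + 1 => 0
  | _ + 1, 0 => 0
  | n + 1, m + 1 => (m + 1) * stirling2 n (m + 1) + stirling2 n m

/-! Let `S = S(x)` and call a simplex `y` of `S` *split* by `f` if `f - f(x)` changes sign on it.
`M_f(x)` is the order complex of the poset of split simplices, and the split faces of a split
simplex have signed count `∑ (-1)^|z| = 1`; by Philip Hall's theorem on the Möbius function this
gives `χ(M_f(x)) = ∑_{y split} (-1)^|y|`. A simplex `y` is not split exactly when `f(x)` is the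
largest or the smallest value of `f` on `y ∪ {x}`, which has probability `2 / (|y| + 1)`. Hence
`E[χ(M_f(x))] = ∑_y (-1)^|y| (1 - 2 / (|y| + 1)) = 2 - 2 K(x) - χ(S)`. Finally `S` is a sphere of
odd dimension `d - 1`, and `χ(G) = χ(G - v) + 1 - χ(S(v))` shows by induction that the Euler
characteristic of odd-dimensional spheres vanishes. -/

open Finset

section Chains

variable {α : Type*} [PartialOrder α]

noncomputable def chains (Q : Finset α) : Finset (Finset α) :=
  Q.powerset.filter fun w : Finset α => IsChain (· < ·) (w : Set α)

/-- By Philip Hall's theorem, the Möbius number `μ(0̂, 1̂)` of `Q` with a bottom and a top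
adjoined. -/
noncomputable def chainSum (Q : Finset α) : ℤ :=
  ∑ w ∈ chains Q, (-1) ^ #w

lemma isChain_insert_iff_of_maximal {Q w : Finset α} {m : α} (hm : Maximal (· ∈ Q) m)
    (hw : w ⊆ Q.erase m) :
    IsChain (· < ·) (insert m w : Set α) ↔ IsChain (· < ·) (w : Set α) ∧ ∀ b ∈ w, b < m := by
  rw [IsChain, Set.pairwise_insert]
  refine and_congr_right' (forall₂_congr fun b hb => ?_)
  obtain ⟨hbm, hbQ⟩ := mem_erase.1 (hw hb)
  simp [hm.not_gt hbQ, hbm.symm]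

lemma chainSum_eq_sub_of_maximal {Q : Finset α} {m : α} (hm : Maximal (· ∈ Q) m) :
    chainSum Q = chainSum (Q.erase m) - chainSum {a ∈ Q | a < m} := by
  have hbelow : chains {a ∈ Q | a < m} =
      (Q.erase m).powerset.filter
        fun w : Finset α => IsChain (· < ·) (w : Set α) ∧ ∀ b ∈ w, b < m := by
    ext w
    simp only [chains, mem_filter, mem_powerset, subset_iff, mem_erase]
    exact ⟨fun ⟨h, hc⟩ => ⟨fun b hb => ⟨(h hb).2.ne, (h hb).1⟩, hc, fun b hb => (h hb).2⟩,
      fun ⟨h, hc, hlt⟩ => ⟨fun b hb => ⟨(h hb).2, hlt b hb⟩, hc⟩⟩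
  unfold chainSum
  conv_lhs => rw [chains, ← insert_erase hm.prop, sum_filter,
    sum_powerset_insert (notMem_erase m Q), ← sum_filter]
  rw [hbelow, chains, sub_eq_add_neg, add_right_inj, sum_filter, ← sum_neg_distrib]
  refine sum_congr rfl fun t ht => ?_
  have hmt : m ∉ t := fun h => (mem_erase.1 (mem_powerset.1 ht h)).1 rfl
  rw [coe_insert, isChain_insert_iff_of_maximal hm (mem_powerset.1 ht), card_insert_of_notMem hmt]
  split_ifs <;> ring

lemma chainSum_empty : chainSum (∅ : Finset α) = 1 := by
  simp [chainSum, chains, filter_singleton]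

lemma chainSum_eq_one_sub_sum (g : α → ℤ) (Q : Finset α)
    (hg : ∀ y ∈ Q, ∑ z ∈ Q with z ≤ y, g z = 1) : chainSum Q = 1 - ∑ y ∈ Q, g y := by
  induction Q using Finset.strongInduction with
  | H Q ih =>
  obtain rfl | hQ := Q.eq_empty_or_nonempty
  · simp [chainSum_empty]
  obtain ⟨m, hm⟩ := Q.exists_maximal hQ
  have restrict : ∀ Q' ⊆ Q, (∀ y ∈ Q', ∀ z ∈ Q, z ≤ y → z ∈ Q') →
      ∀ y ∈ Q', ∑ z ∈ Q' with z ≤ y, g z = 1 := fun Q' hQ' hdown y hy => by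
    rw [← hg y (hQ' hy)]
    refine sum_congr (ext fun z => ?_) fun _ _ => rfl
    simp only [mem_filter]
    exact ⟨fun h => ⟨hQ' h.1, h.2⟩, fun h => ⟨hdown y hy z h.1 h.2, h.2⟩⟩
  have herase := ih _ (erase_ssubset hm.prop) (restrict _ (erase_subset _ _) fun y hy z hz hzy =>
    mem_erase.2 ⟨fun hzm => (mem_erase.1 hy).1 (hm.eq_of_ge (mem_erase.1 hy).2 (hzm ▸ hzy)), hz⟩)
  have hbelow := ih {a ∈ Q | a < m} (filter_ssubset.2 ⟨m, hm.prop, lt_irrefl m⟩)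
    (restrict _ (filter_subset _ _) fun y hy z hz hzy =>
      mem_filter.2 ⟨hz, hzy.trans_lt (mem_filter.1 hy).2⟩)
  have hgm : ∑ z ∈ Q with z < m, g z + g m = 1 := by
    have hsplit : {z ∈ Q | z ≤ m} = insert m {z ∈ Q | z < m} := by
      ext z
      simp only [mem_insert, mem_filter, le_iff_lt_or_eq]
      constructor
      · rintro ⟨hz, hzm | rfl⟩ <;> simp [*]
      · rintro (rfl | ⟨hz, hzm⟩) <;> simp [*, hm.prop]
    rw [← hg m hm.prop, hsplit, sum_insert (by simp), add_comm]
  rw [chainSum_eq_sub_of_maximal hm, herase, hbelow, ← add_sum_erase Q g hm.prop]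
  linarith

end Chains

lemma sum_powerset_filter_exists_and_exists_neg_one_pow {α : Type*} [DecidableEq α]
    {y : Finset α} {p q : α → Prop} (hpq : ∀ a ∈ y, p a ↔ ¬ q a) (hp : ∃ a ∈ y, p a)
    (hq : ∃ a ∈ y, q a) :
    ∑ z ∈ y.powerset with (∃ a ∈ z, p a) ∧ ∃ b ∈ z, q b, (-1 : ℤ) ^ #z = 1 := by
  set A := {a ∈ y | p a}
  set B := {a ∈ y | q a}
  have hA : A ≠ ∅ := by simpa [A, filter_eq_empty_iff] using hp
  have hB : B ≠ ∅ := by simpa [B, filter_eq_empty_iff] using hq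
  have hy : y ≠ ∅ := by rintro rfl; simp at hp
  have hcompl : {z ∈ y.powerset | ¬ ((∃ a ∈ z, p a) ∧ ∃ b ∈ z, q b)} = A.powerset ∪ B.powerset := by
    ext z
    simp only [mem_filter, mem_union, mem_powerset, subset_iff, A, B, not_and_or, not_exists]
    grind
  have hAB : A.powerset ∩ B.powerset = {∅} := by
    ext z
    simp only [mem_inter, mem_powerset, mem_singleton, subset_iff, A, B, mem_filter,
      eq_empty_iff_forall_notMem]
    grind
  have hunion := sum_union_inter (s₁ := A.powerset) (s₂ := B.powerset) (f := fun z => (-1 : ℤ) ^ #z)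
  have htotal := sum_filter_add_sum_filter_not y.powerset (fun z => (∃ a ∈ z, p a) ∧ ∃ b ∈ z, q b)
    (fun z => (-1 : ℤ) ^ #z)
  rw [hcompl, sum_powerset_neg_one_pow_card, if_neg hy] at htotal
  rw [hAB, sum_powerset_neg_one_pow_card, sum_powerset_neg_one_pow_card, if_neg hA,
    if_neg hB] at hunion
  simp only [sum_singleton, card_empty, pow_zero] at hunion
  linarith

namespace FGraph

variable {V : Type}

noncomputable def simplices (G : FGraph V) : Finset (Finset V) :=
  G.verts.powerset.filter G.IsSimplex

variable {G : FGraph V} {y z : Finset V}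

lemma mem_simplices : y ∈ G.simplices ↔ G.IsSimplex y := by
  simp only [simplices, mem_filter, mem_powerset, and_iff_right_iff_imp]
  exact fun h => coe_subset.1 h.2.1

lemma IsSimplex.one_le_card (hy : G.IsSimplex y) : 1 ≤ #y :=
  card_pos.2 hy.1

lemma IsSimplex.card_le (hy : G.IsSimplex y) : #y ≤ #G.verts :=
  card_le_card (coe_subset.1 hy.2.1)

lemma IsSimplex.mono (hy : G.IsSimplex y) (hzy : z ⊆ y) (hz : z.Nonempty) : G.IsSimplex z :=
  ⟨hz, (coe_subset.2 hzy).trans hy.2.1, fun a ha b hb => hy.2.2 a (hzy ha) b (hzy hb)⟩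

lemma sum_simplices_eq_sum_range {M : Type*} [AddCommMonoid M] (g : ℕ → M) {N : ℕ}
    (hN : #G.verts ≤ N) :
    ∑ y ∈ G.simplices, g #y = ∑ k ∈ range N, G.numSimplices (k + 1) • g (k + 1) := by
  rw [← sum_fiberwise_of_maps_to (g := fun y => #y - 1) (t := range N) fun y hy => by
    have hy := mem_simplices.1 hy
    have := hy.card_le
    have := hy.one_le_card
    simp only [mem_range]
    omega]
  refine sum_congr rfl fun k _ => ?_
  have hfiber : {y ∈ G.simplices | #y - 1 = k} =
      {x ∈ G.verts.powerset | G.IsSimplex x ∧ #x = k + 1} := by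
    ext y
    simp only [simplices, mem_filter, and_assoc]
    grind [IsSimplex.one_le_card]
  rw [hfiber, numSimplices, ← sum_const]
  exact sum_congr rfl fun y hy => by rw [(mem_filter.1 hy).2.2]

lemma euler_eq_sum_simplices (G : FGraph V) :
    G.euler = ∑ y ∈ G.simplices, (-1 : ℤ) ^ (#y + 1) := by
  rw [sum_simplices_eq_sum_range (fun j => (-1 : ℤ) ^ (j + 1)) le_rfl, euler]
  refine sum_congr rfl fun k _ => ?_
  rw [nsmul_eq_mul]
  ring

lemma ne_of_mem_unitSphere {x a : V} (ha : a ∈ (G.unitSphere x).verts) : a ≠ x := by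
  rintro rfl
  exact G.loopless a (mem_filter.1 ha).2

lemma unitSphere_verts_subset (G : FGraph V) (v : V) : (G.unitSphere v).verts ⊆ G.verts :=
  filter_subset _ _

lemma curvature_eq_sum_simplices (G : FGraph V) (v : V) :
    G.curvature v = 1 + ∑ y ∈ (G.unitSphere v).simplices, (-1 : ℝ) ^ #y / (#y + 1) := by
  rw [sum_simplices_eq_sum_range (fun j => (-1 : ℝ) ^ j / (j + 1))
    (card_le_card (G.unitSphere_verts_subset v)), curvature, sum_range_succ', add_comm]
  simp [nsmul_eq_mul, mul_div_assoc, mul_comm]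

lemma isSimplex_induce {P : V → Prop} :
    (G.induce P).IsSimplex y ↔ G.IsSimplex y ∧ ∀ a ∈ y, P a := by
  simp only [IsSimplex, induce]
  grind

lemma simplices_erase (G : FGraph V) (v : V) :
    (G.erase v).simplices = {y ∈ G.simplices | v ∉ y} := by
  ext y
  simp only [mem_filter, mem_simplices, erase, isSimplex_induce]
  grind

lemma isSimplex_insert {v : V} (hv : v ∉ z) :
    G.IsSimplex (insert v z) ↔ v ∈ G.verts ∧ (z = ∅ ∨ (G.unitSphere v).IsSimplex z) := by
  rw [unitSphere, isSimplex_induce]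
  simp only [IsSimplex, insert_subset_iff, mem_insert, insert_nonempty, true_and,
    ← not_nonempty_iff_eq_empty]
  grind [G.symm]

lemma notMem_of_isSimplex_unitSphere {v : V} (hz : (G.unitSphere v).IsSimplex z) : v ∉ z :=
  fun hvz => G.loopless v ((isSimplex_induce.1 hz).2 v hvz)

lemma empty_notMem_simplices (G : FGraph V) : ∅ ∉ G.simplices :=
  fun h => not_nonempty_empty (mem_simplices.1 h).1

lemma filter_mem_simplices {v : V} (hv : v ∈ G.verts) :
    {y ∈ G.simplices | v ∈ y} = (insert ∅ (G.unitSphere v).simplices).image (insert v) := by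
  ext y
  simp only [mem_filter, mem_simplices, mem_image, mem_insert]
  constructor
  · rintro ⟨hy, hvy⟩
    refine ⟨y.erase v, ?_, insert_erase hvy⟩
    rw [← insert_erase hvy, isSimplex_insert (notMem_erase v y)] at hy
    simpa [mem_simplices] using hy.2
  · rintro ⟨z, hz, rfl⟩
    have hvz : v ∉ z := by
      rcases hz with rfl | hz
      exacts [notMem_empty v, notMem_of_isSimplex_unitSphere hz]
    exact ⟨(isSimplex_insert hvz).2 ⟨hv, hz⟩, mem_insert_self v z⟩

lemma euler_eq_euler_erase_add_one_sub {v : V} (hv : v ∈ G.verts) :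
    G.euler = (G.erase v).euler + 1 - (G.unitSphere v).euler := by
  have hvz : ∀ z ∈ insert ∅ (G.unitSphere v).simplices, v ∉ z := by
    simp only [mem_insert, forall_eq_or_imp, notMem_empty, not_false_eq_true, true_and]
    exact fun z hz => notMem_of_isSimplex_unitSphere (mem_simplices.1 hz)
  have hinj : Set.InjOn (insert v) (↑(insert ∅ (G.unitSphere v).simplices) : Set (Finset V)) := by
    intro z₁ h₁ z₂ h₂ h
    rw [← erase_insert (hvz z₁ h₁), h, erase_insert (hvz z₂ h₂)]
  have hcard : ∀ z ∈ (G.unitSphere v).simplices,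
      (-1 : ℤ) ^ (#(insert v z) + 1) = -(-1) ^ (#z + 1) :=
    fun z hz => by rw [card_insert_of_notMem (hvz z (mem_insert_of_mem hz))]; ring
  simp only [euler_eq_sum_simplices]
  rw [← sum_filter_not_add_sum_filter _ (v ∈ ·), ← simplices_erase, filter_mem_simplices hv,
    sum_image hinj, sum_insert (empty_notMem_simplices _), sum_congr rfl hcard, sum_neg_distrib]
  simp only [insert_empty_eq, card_singleton]
  ring

lemma euler_eq_zero_of_verts_eq_empty (h : G.verts = ∅) : G.euler = 0 := by
  simp [euler, h]

lemma Contractible.euler_eq_one (h : G.Contractible) : G.euler = 1 := by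
  induction h with
  | single G v hv =>
    have : G.simplices = {{v}} := by
      ext y
      simp only [mem_simplices, IsSimplex, hv, mem_singleton]
      constructor
      · exact fun ⟨hne, hsub, _⟩ => hne.subset_singleton_iff.1 hsub
      · rintro rfl
        simp
    simp [euler_eq_sum_simplices, this]
  | step G v hv _ _ ih₁ ih₂ =>
    rw [euler_eq_euler_erase_add_one_sub hv, ih₁, ih₂]
    ring

lemma IsSphere.euler_eq : ∀ {k : ℤ} {H : FGraph V}, H.IsSphere k → H.euler = if Even k then 2 else 0
  | _, _, .empty _ h => by simp [euler_eq_zero_of_verts_eq_empty h]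
  | _, _, .punctured k H (.intro _ _ _ hS) v hv hc => by
    rw [euler_eq_euler_erase_add_one_sub hv, hc.euler_eq_one, (hS v hv).euler_eq]
    simp only [Int.even_sub_one]
    split_ifs <;> norm_num

lemma IsManifold.isSphere_unitSphere {d : ℤ} (hG : G.IsManifold d) {v : V} (hv : v ∈ G.verts) :
    (G.unitSphere v).IsSphere (d - 1) := by
  cases hG with
  | intro _ _ _ h => exact h v hv

lemma IsManifold.euler_unitSphere_of_even {d : ℤ} (hG : G.IsManifold d) (hd : Even d) (v : V) :
    (G.unitSphere v).euler = 0 := by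
  by_cases hv : v ∈ G.verts
  · rw [(hG.isSphere_unitSphere hv).euler_eq, if_neg (by simpa [Int.even_sub_one] using hd)]
  · exact euler_eq_zero_of_verts_eq_empty
      (filter_eq_empty_iff.2 fun w _ hvw => hv (G.mem_of_adj hvw))

lemma simplices_barycentric_induce (P : Finset V → Prop) [DecidablePred P] :
    (G.barycentric.induce P).simplices = {w ∈ chains {y ∈ G.simplices | P y} | w.Nonempty} := by
  ext w
  rw [mem_simplices, isSimplex_induce, mem_filter, chains, mem_filter, mem_powerset]
  constructor
  · rintro ⟨⟨hne, hsub, hadj⟩, hP⟩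
    exact ⟨⟨fun y hy => mem_filter.2 ⟨coe_subset.1 hsub hy, hP y hy⟩,
      fun a ha b hb hab => (hadj a ha b hb hab).2.2⟩, hne⟩
  · rintro ⟨⟨hsub, hchain⟩, hne⟩
    have hmem : ∀ y ∈ w, G.IsSimplex y ∧ P y := fun y hy => by
      simpa [mem_simplices] using hsub hy
    exact ⟨⟨hne, fun y hy => mem_simplices.2 (hmem y hy).1, fun a ha b hb hab =>
      ⟨(hmem a ha).1, (hmem b hb).1, hchain ha hb hab⟩⟩, fun y hy => (hmem y hy).2⟩

lemma euler_barycentric_induce (P : Finset V → Prop) [DecidablePred P] :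
    (G.barycentric.induce P).euler = 1 - chainSum {y ∈ G.simplices | P y} := by
  have hempty : {w ∈ chains {y ∈ G.simplices | P y} | ¬ w.Nonempty} = {∅} := by
    ext w
    simp only [chains, mem_filter, mem_powerset, not_nonempty_iff_eq_empty, mem_singleton]
    constructor
    · exact fun h => h.2
    · rintro rfl
      simp
  rw [euler_eq_sum_simplices, simplices_barycentric_induce, chainSum,
    ← sum_filter_add_sum_filter_not (chains _) (·.Nonempty), hempty]
  simp [pow_succ]

lemma euler_levelSet {f : V → ℝ} {c : ℝ} (hf : ∀ a ∈ G.verts, f a ≠ c) :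
    (G.levelSet f c).euler =
      ∑ y ∈ G.simplices with (∃ a ∈ y, f a - c < 0) ∧ ∃ b ∈ y, 0 < f b - c, (-1) ^ #y := by
  rw [levelSet, euler_barycentric_induce, chainSum_eq_one_sub_sum (fun y => (-1) ^ #y),
    sub_sub_cancel]
  intro y hy
  obtain ⟨hys, hsc⟩ := mem_filter.1 hy
  have hys := mem_simplices.1 hys
  refine (sum_congr (ext fun z => ?_) fun _ _ => rfl).trans
    (sum_powerset_filter_exists_and_exists_neg_one_pow (fun a ha => ?_) hsc.1 hsc.2)
  · simp only [mem_filter, mem_powerset, mem_simplices]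
    constructor
    · rintro ⟨⟨_, hz⟩, hzy⟩
      exact ⟨hzy, hz⟩
    · rintro ⟨hzy, hz⟩
      obtain ⟨a, ha, -⟩ := hz.1
      exact ⟨⟨hys.mono hzy ⟨a, ha⟩, hz⟩, hzy⟩
  · rw [sub_neg, sub_pos, not_lt, (hf a (coe_subset.1 hys.2.1 ha)).le_iff_lt]

end FGraph

section RandomOrder

open Equiv

variable {V β : Type*} [Fintype V] [DecidableEq V] [LinearOrder β] [Fintype β]

lemma card_filter_forall_lt_mul_card {T : Finset V} {t : V} (ht : t ∈ T) :
    #{e : V ≃ β | ∀ a ∈ T, a ≠ t → e a < e t} * #T = Fintype.card (V ≃ β) := by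
  set A : V → Finset (V ≃ β) := fun w => {e | ∀ a ∈ T, a ≠ w → e a < e w}
  have hcover : (univ : Finset (V ≃ β)) = T.biUnion A := by
    refine (eq_univ_of_forall fun e => ?_).symm
    obtain ⟨w, hw, hmax⟩ := T.exists_max_image e ⟨t, ht⟩
    exact mem_biUnion.2 ⟨w, hw, mem_filter.2
      ⟨mem_univ _, fun a ha haw => (hmax a ha).lt_of_ne (e.injective.ne haw)⟩⟩
  have hdisj : (T : Set V).PairwiseDisjoint A := fun w hw w' hw' hne =>
    disjoint_left.2 fun e he he' =>
      ((mem_filter.1 he).2 w' hw' hne.symm).asymm ((mem_filter.1 he').2 w hw hne)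
  have hmaps : ∀ t ∈ T, ∀ w ∈ T, ∀ e ∈ A w, (swap t w).trans e ∈ A t := by
    intro t ht w _ e he
    simp only [A, mem_filter, mem_univ, true_and, trans_apply, swap_apply_left] at he ⊢
    intro a ha hat
    refine he _ ?_ (by simpa using (swap t w).injective.ne hat)
    rcases eq_or_ne a w with rfl | haw
    · rwa [swap_apply_right]
    · rwa [swap_apply_of_ne_of_ne hat haw]
  have hswap : ∀ w ∈ T, #(A w) = #(A t) := fun w hw =>
    card_nbij' (fun e => (swap t w).trans e) (fun e => (swap t w).trans e)
      (fun e he => hmaps t ht w hw e he)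
      (fun e he => swap_comm t w ▸ hmaps w hw t ht e he)
      (fun e _ => by ext; simp) (fun e _ => by ext; simp)
  have hcard := card_biUnion hdisj
  rw [← hcover, card_univ, sum_congr rfl hswap, sum_const, smul_eq_mul] at hcard
  rw [hcard, mul_comm]

lemma card_filter_forall_lt {x : V} {y : Finset V} (hx : x ∉ y) :
    (#{e : V ≃ β | ∀ a ∈ y, e a < e x} : ℝ) = Fintype.card (V ≃ β) / (#y + 1) := by
  have h := card_filter_forall_lt_mul_card (β := β) (mem_insert_self x y)
  rw [card_insert_of_notMem hx] at h
  rw [eq_div_iff (by positivity), ← h]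
  push_cast
  congr 3
  ext e
  simp only [mem_filter, mem_insert, forall_eq_or_imp]
  grind

lemma card_filter_forall_gt {x : V} {y : Finset V} (hx : x ∉ y) :
    (#{e : V ≃ β | ∀ a ∈ y, e x < e a} : ℝ) = Fintype.card (V ≃ β) / (#y + 1) :=
  card_filter_forall_lt (β := βᵒᵈ) hx

lemma card_filter_exists_lt_and_exists_gt {x : V} {y : Finset V} (hx : x ∉ y) (hy : y.Nonempty) :
    (#{e : V ≃ β | (∃ a ∈ y, e a < e x) ∧ ∃ b ∈ y, e x < e b} : ℝ) =
      Fintype.card (V ≃ β) * (1 - 2 / (#y + 1)) := by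
  set below : Finset (V ≃ β) := {e | ∀ a ∈ y, e a < e x}
  set above : Finset (V ≃ β) := {e | ∀ a ∈ y, e x < e a}
  have hsplit : ({e : V ≃ β | (∃ a ∈ y, e a < e x) ∧ ∃ b ∈ y, e x < e b} : Finset _) =
      univ \ (below ∪ above) := by
    ext e
    have hne : ∀ a ∈ y, e a ≠ e x := fun a ha => e.injective.ne (ne_of_mem_of_not_mem ha hx)
    simp only [below, above, mem_filter, mem_sdiff, mem_union, mem_univ, true_and]
    grind
  have hdisj : Disjoint below above := by
    obtain ⟨a, ha⟩ := hy
    exact disjoint_filter.2 fun e _ h₁ h₂ => (h₁ a ha).asymm (h₂ a ha)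
  have h := card_sdiff_add_card_eq_card (subset_univ (below ∪ above))
  rw [← hsplit, card_union_of_disjoint hdisj, card_univ] at h
  have hR : (#{e : V ≃ β | (∃ a ∈ y, e a < e x) ∧ ∃ b ∈ y, e x < e b} : ℝ) + (#below + #above) =
      Fintype.card (V ≃ β) := by exact_mod_cast h
  rw [card_filter_forall_lt hx, card_filter_forall_gt hx] at hR
  linear_combination hR

end RandomOrder

namespace FGraph

variable {V : Type} {β : Type*} [Fintype V] [DecidableEq V] [LinearOrder β] [Fintype β]

lemma sum_euler_levelSet_unitSphere {φ : β → ℝ} (hφ : StrictMono φ) (G : FGraph V) (x : V) :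
    ∑ e : V ≃ β, (((G.unitSphere x).levelSet (fun v => φ (e v)) (φ (e x))).euler : ℝ) =
      Fintype.card (V ≃ β) * (2 - 2 * G.curvature x - (G.unitSphere x).euler) := by
  have hlevel : ∀ e : V ≃ β, ((G.unitSphere x).levelSet (fun v => φ (e v)) (φ (e x))).euler =
      ∑ y ∈ (G.unitSphere x).simplices,
        if (∃ a ∈ y, e a < e x) ∧ ∃ b ∈ y, e x < e b then (-1) ^ #y else 0 := fun e => by
    rw [euler_levelSet fun a ha => hφ.injective.ne (e.injective.ne (ne_of_mem_unitSphere ha)),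
      sum_filter]
    simp only [sub_neg, sub_pos, hφ.lt_iff_lt]
  push_cast [hlevel]
  rw [sum_comm]
  simp only [← sum_filter, sum_const, nsmul_eq_mul]
  have hterm : ∀ y ∈ (G.unitSphere x).simplices,
      (#{e : V ≃ β | (∃ a ∈ y, e a < e x) ∧ ∃ b ∈ y, e x < e b} : ℝ) * (-1) ^ #y =
        Fintype.card (V ≃ β) * ((-1) ^ #y - 2 * ((-1) ^ #y / (#y + 1))) := fun y hy => by
    have hy := mem_simplices.1 hy
    rw [card_filter_exists_lt_and_exists_gt (notMem_of_isSimplex_unitSphere hy) hy.1]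
    ring
  rw [sum_congr rfl hterm, ← mul_sum, sum_sub_distrib, ← mul_sum, curvature_eq_sum_simplices,
    euler_eq_sum_simplices]
  push_cast [pow_succ, ← sum_mul]
  ring

end FGraph

/-- For an even-dimensional manifold, the curvature of a vertex `x` is
`K(x) = 1 - E[χ(M_f(x))]/2`, where the expectation is taken over the uniformly random
bijections `f : V → {1,…,|V|}` and `M_f(x) = {f = f(x)}` is the central surface inside
the unit sphere `S(x)`. -/
theorem curvature_index_expectation_even {V : Type} [Fintype V] [DecidableEq V]
    (G : FGraph V) (hV : G.verts = Finset.univ) (d : ℤ) (hd : Even d)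
    (hG : FGraph.IsManifold d G) (x : V) :
    G.curvature x = 1 -
      ((∑ e : V ≃ Fin (Fintype.card V),
          (((G.unitSphere x).levelSet (fun v => ((e v : ℕ) : ℝ) + 1)
              (((e x : ℕ) : ℝ) + 1)).euler : ℝ)) /
        (Nat.factorial (Fintype.card V))) / 2 := by
  have hφ : StrictMono fun i : Fin (Fintype.card V) => ((i : ℕ) : ℝ) + 1 :=
    fun i j hij => by simpa using hij
  rw [G.sum_euler_levelSet_unitSphere hφ x, hG.euler_unitSphere_of_even hd,
    Fintype.card_equiv (Fintype.equivFin V)]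
  field_simp
  ring
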